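/- arXiv:1611.05999 — 4 statements merged into one kernel-verified Lean document; each statement's English description precedes it below -/
import Mathlib

section
/- Let a > 0, let α ∈ (0,2), and let σ : ℝ² × [0,∞) → ℝ be measurable and bounded (|σ(x,t)| ≤ C₀ for all x, t). Then for every x ∈ ℝ² and every t ≥ 0 the function y ↦ |G(x,y,t)|^α is integrable over ℝ², i.e. ∫_{ℝ²} |G(x,y,t)|^α dy < ∞. (This is the condition guaranteeing that the candidate solution U(x,t) = ∫_{ℝ²} G(x,y,t) M(dy) of the planar stochastic wave equation is well defined as an integral with respect to a symmetric α-stable random measure.) -/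
/-!
Bounding `σ` by `C₀` and using `a²(t-τ)² - r² ≥ 2ar(L - τ)` for `r = |x-y|` and
`L = t - r/a`, the `τ`-integral defining `G` is dominated by a multiple of
`∫₀^L (L-τ)^(-1/2) dτ = 2√L ≤ 2√t`, so that
`|G(x,y,t)| ≤ K |x-y|^(-1/2)` with `K` depending only on `a`, `C₀`, `t`. Hence
`|G|^α ≤ K^α |x-y|^(-α/2)`, which is integrable near `x` in the plane because `α/2 < 2`, and
`G(x,·,t)` vanishes outside the ball of radius `at` about `x`.
-/

open MeasureTheory Real

/-- The planar wave kernel: `G(x,y,t) = (1/(2πa)) ∫₀^{t - |x-y|/a} σ(y,τ)/√(a²(t-τ)² - |x-y|²) dτ`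
when `|x-y| < a t`, and `0` otherwise. -/
noncomputable def waveKernel (a : ℝ) (σ : EuclideanSpace ℝ (Fin 2) → ℝ → ℝ)
    (x y : EuclideanSpace ℝ (Fin 2)) (t : ℝ) : ℝ :=
  if dist x y < a * t then
    (1 / (2 * Real.pi * a)) *
      ∫ τ in (0 : ℝ)..(t - dist x y / a),
        σ y τ / Real.sqrt (a ^ 2 * (t - τ) ^ 2 - (dist x y) ^ 2)
  else 0

section

variable {E F : Type*} [NormedAddCommGroup E] [NormedSpace ℝ E] [FiniteDimensional ℝ E]
  [MeasurableSpace E] [BorelSpace E] [NormedAddCommGroup F] {μ : Measure E} [μ.IsAddHaarMeasure]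

lemma integrable_of_norm_le_rpow_dist (hd : 1 ≤ Module.finrank ℝ E) {f : E → F} {x : E}
    {C α R : ℝ} (hα : α < Module.finrank ℝ E)
    (h_decay : ∀ᵐ y ∂μ, ‖f y‖ ≤ C * dist y x ^ (-α))
    (h_supp : ∀ y, R ≤ dist y x → f y = 0) (h_meas : AEStronglyMeasurable f μ) :
    Integrable f μ := by
  have h_shift := measurePreserving_add_right μ x
  have h_ball : IntegrableOn (fun z ↦ f (z + x)) (Metric.ball 0 R) μ := by
    refine integrableOn_ball_of_norm_le_rpow (C := C) hd hα (ae_restrict_of_ae ?_)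
      (h_meas.comp_measurePreserving h_shift)
    filter_upwards [h_shift.quasiMeasurePreserving.ae h_decay] with z hz
    simpa using hz
  have h_int : Integrable (fun z ↦ f (z + x)) μ := by
    refine (integrableOn_iff_integrable_of_support_subset fun z hz ↦ ?_).1 h_ball
    by_contra hR
    exact hz (h_supp _ (by simpa using hR))
  simpa using h_int.comp_sub_right x

end

open Set in
theorem MeasureTheory.StronglyMeasurable.intervalIntegral_prod_right {X E : Type*}
    [MeasurableSpace X] [NormedAddCommGroup E] [NormedSpace ℝ E] {F : X × ℝ → E}
    (hF : StronglyMeasurable F) {lo hi : X → ℝ} (hlo : Measurable lo) (hhi : Measurable hi) :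
    StronglyMeasurable fun y ↦ ∫ τ in lo y..hi y, F (y, τ) := by
  have h_Ioc : ∀ g h : X → ℝ, Measurable g → Measurable h →
      StronglyMeasurable fun y ↦ ∫ τ in Ioc (g y) (h y), F (y, τ) := by
    intro g h hg hh
    have hS : MeasurableSet {p : X × ℝ | g p.1 < p.2 ∧ p.2 ≤ h p.1} :=
      (_root_.measurableSet_lt (hg.comp measurable_fst) measurable_snd).inter
        (_root_.measurableSet_le measurable_snd (hh.comp measurable_fst))
    convert (hF.indicator hS).integral_prod_right' (ν := volume) using 2 with y
    rw [← integral_indicator measurableSet_Ioc]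
    rfl
  simp only [intervalIntegral]
  exact (h_Ioc lo hi hlo hhi).sub (h_Ioc hi lo hhi hlo)

theorem integral_sub_rpow {p : ℝ} (hp : -1 < p) (L : ℝ) :
    ∫ τ in (0 : ℝ)..L, (L - τ) ^ p = L ^ (p + 1) / (p + 1) := by
  rw [intervalIntegral.integral_comp_sub_left (fun s ↦ s ^ p), sub_self, sub_zero,
    integral_rpow (Or.inl hp), zero_rpow (by linarith), sub_zero]

theorem intervalIntegrable_sub_rpow {p : ℝ} (hp : -1 < p) (L : ℝ) :
    IntervalIntegrable (fun τ ↦ (L - τ) ^ p) volume 0 L := by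
  simpa using
    ((intervalIntegral.intervalIntegrable_rpow' (a := 0) (b := L) hp).comp_sub_left L).symm

theorem abs_div_sqrt_sq_sub_sq_le {a C₀ s t r τ : ℝ} (ha : 0 < a) (hr : 0 < r)
    (hs : |s| ≤ C₀) (hτ : τ < t - r / a) :
    |s / √(a ^ 2 * (t - τ) ^ 2 - r ^ 2)| ≤
      C₀ / √(2 * a * r) * (t - r / a - τ) ^ (-(1 / 2) : ℝ) := by
  have hL : 0 < t - r / a - τ := by linarith
  have h_gap : a * (t - r / a - τ) = a * (t - τ) - r := by field_simp; ring
  -- `u² - r² = 2r(u - r) + (u - r)²` with `u = a(t - τ)`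
  have h_lower : 2 * a * r * (t - r / a - τ) ≤ a ^ 2 * (t - τ) ^ 2 - r ^ 2 := by
    nlinarith [sq_nonneg (a * (t - τ) - r)]
  have h_pos : 0 < √(2 * a * r * (t - r / a - τ)) := by positivity
  rw [abs_div, abs_of_nonneg (sqrt_nonneg _), rpow_neg hL.le, ← sqrt_eq_rpow, ← div_eq_mul_inv,
    div_div, ← sqrt_mul (by positivity)]
  exact div_le_div₀ ((abs_nonneg _).trans hs) hs h_pos (sqrt_le_sqrt h_lower)

section

variable {a : ℝ} {σ : EuclideanSpace ℝ (Fin 2) → ℝ → ℝ}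

theorem measurable_waveKernel (hσ : Measurable (Function.uncurry σ))
    (x : EuclideanSpace ℝ (Fin 2)) (t : ℝ) :
    Measurable fun y ↦ waveKernel a σ x y t := by
  have hF : StronglyMeasurable fun p : EuclideanSpace ℝ (Fin 2) × ℝ ↦
      σ p.1 p.2 / √(a ^ 2 * (t - p.2) ^ 2 - dist x p.1 ^ 2) :=
    (hσ.div (by fun_prop)).stronglyMeasurable
  unfold waveKernel
  exact Measurable.ite (measurableSet_lt (by fun_prop) measurable_const)
    (measurable_const.mul
      (hF.intervalIntegral_prod_right measurable_const (by fun_prop)).measurable)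
    measurable_const

theorem abs_waveKernel_le {C₀ : ℝ} (ha : 0 < a) {x y : EuclideanSpace ℝ (Fin 2)}
    (hσ : ∀ τ, 0 ≤ τ → |σ y τ| ≤ C₀) (hxy : x ≠ y) (t : ℝ) :
    |waveKernel a σ x y t| ≤
      C₀ * √t / (π * a * √(2 * a)) * dist x y ^ (-(1 / 2) : ℝ) := by
  have hC₀ : 0 ≤ C₀ := (abs_nonneg _).trans (hσ 0 le_rfl)
  set r := dist x y
  have hr : 0 < r := dist_pos.2 hxy
  unfold waveKernel
  split_ifs with hrt
  · set L := t - r / a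
    have hL : 0 < L := by have := (div_lt_iff₀ ha).2 (by linarith : r < t * a); linarith
    have hLt : L ≤ t := by have := div_nonneg hr.le ha.le; linarith
    have h_int : |∫ τ in (0 : ℝ)..L, σ y τ / √(a ^ 2 * (t - τ) ^ 2 - r ^ 2)| ≤
        C₀ / √(2 * a * r) * (2 * √L) := by
      calc |∫ τ in (0 : ℝ)..L, σ y τ / √(a ^ 2 * (t - τ) ^ 2 - r ^ 2)|
          ≤ ∫ τ in (0 : ℝ)..L, C₀ / √(2 * a * r) * (L - τ) ^ (-(1 / 2) : ℝ) := by
            rw [← Real.norm_eq_abs]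
            refine intervalIntegral.norm_integral_le_of_norm_le hL.le ?_
              ((intervalIntegrable_sub_rpow (p := -(1 / 2)) (by norm_num) L).const_mul _)
            filter_upwards [volume.ae_ne L] with τ hτL hτ
            exact abs_div_sqrt_sq_sub_sq_le ha hr (hσ τ hτ.1.le) (lt_of_le_of_ne hτ.2 hτL)
        _ = C₀ / √(2 * a * r) * (2 * √L) := by
            rw [intervalIntegral.integral_const_mul, integral_sub_rpow (by norm_num),
              sqrt_eq_rpow L]
            congr 1
            norm_num
            ring
    calc |1 / (2 * π * a) * ∫ τ in (0 : ℝ)..L, σ y τ / √(a ^ 2 * (t - τ) ^ 2 - r ^ 2)|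
        ≤ 1 / (2 * π * a) * (C₀ / √(2 * a * r) * (2 * √t)) := by
          rw [abs_mul, abs_of_pos (by positivity)]
          gcongr
          exact h_int.trans (by gcongr)
      _ = C₀ * √t / (π * a * √(2 * a)) * r ^ (-(1 / 2) : ℝ) := by
          rw [rpow_neg hr.le, ← sqrt_eq_rpow, sqrt_mul (by positivity)]
          field_simp
  · rw [abs_zero]
    positivity

end

theorem integrability_of_wave_kernel_alpha_power_general
    (a : ℝ) (ha : 0 < a) (α : ℝ) (hα : α ∈ Set.Ioo (0 : ℝ) 2)
    (σ : EuclideanSpace ℝ (Fin 2) → ℝ → ℝ) (C₀ : ℝ)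
    (hσ_meas : Measurable (Function.uncurry σ))
    (hσ_bdd : ∀ x : EuclideanSpace ℝ (Fin 2), ∀ t : ℝ, 0 ≤ t → |σ x t| ≤ C₀)
    (x : EuclideanSpace ℝ (Fin 2)) (t : ℝ) :
    Integrable (fun y : EuclideanSpace ℝ (Fin 2) => |waveKernel a σ x y t| ^ α) := by
  obtain ⟨hα₀, hα₂⟩ := hα
  set K := C₀ * √t / (π * a * √(2 * a))
  have hK : 0 ≤ K := by
    have := (abs_nonneg _).trans (hσ_bdd x 0 le_rfl)
    positivity
  have h_decay : ∀ y, y ≠ x →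
      ‖|waveKernel a σ x y t| ^ α‖ ≤ K ^ α * dist y x ^ (-(α / 2)) := by
    intro y hy
    rw [Real.norm_of_nonneg (by positivity), dist_comm]
    calc |waveKernel a σ x y t| ^ α ≤ (K * dist x y ^ (-(1 / 2) : ℝ)) ^ α :=
          rpow_le_rpow (abs_nonneg _) (abs_waveKernel_le ha (hσ_bdd y) hy.symm t) hα₀.le
      _ = K ^ α * dist x y ^ (-(α / 2)) := by
          rw [mul_rpow hK (by positivity), ← rpow_mul dist_nonneg]
          ring_nf
  refine integrable_of_norm_le_rpow_dist (x := x) (R := a * t) (by simp) (by norm_num; linarith)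
    ((volume.ae_ne x).mono h_decay) (fun y hy ↦ ?_)
    ((measurable_waveKernel hσ_meas x t).abs.pow_const α).aestronglyMeasurable
  rw [dist_comm] at hy
  simp [waveKernel, not_lt.2 hy, zero_rpow hα₀.ne']

/-- For `a > 0`, `α ∈ (0,2)` and `σ` measurable and bounded, for every `x` and `t ≥ 0`
the function `y ↦ |G(x,y,t)|^α` is integrable over `ℝ²`. -/
theorem integrability_of_wave_kernel_alpha_power
    (a : ℝ) (ha : 0 < a) (α : ℝ) (hα : α ∈ Set.Ioo (0 : ℝ) 2)
    (σ : EuclideanSpace ℝ (Fin 2) → ℝ → ℝ) (C₀ : ℝ)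
    (hσ_meas : Measurable (Function.uncurry σ))
    (hσ_bdd : ∀ x : EuclideanSpace ℝ (Fin 2), ∀ t : ℝ, 0 ≤ t → |σ x t| ≤ C₀)
    (x : EuclideanSpace ℝ (Fin 2)) (t : ℝ) (ht : 0 ≤ t) :
    Integrable (fun y : EuclideanSpace ℝ (Fin 2) => |waveKernel a σ x y t| ^ α) :=
  integrability_of_wave_kernel_alpha_power_general a ha α hα σ C₀ hσ_meas hσ_bdd x t
end

section
/- Let a > 0 and let σ : ℝ² × [0,∞) → ℝ satisfy |σ(x,t)| ≤ C₀ for all x ∈ ℝ², t ≥ 0. Then for all x, y ∈ ℝ² and t > 0 with 0 < |x−y| < a t, |G(x,y,t)| ≤ (C₀ / (2π a²)) · ln( a t / |x−y| + √( (a t / |x−y|)² − 1 ) ). -/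
open MeasureTheory Real

/-!
Bounding `|σ|` by `C₀` leaves `C₀ / (2πa)` times `∫₀^{t - r/a} dτ / √(a²(t - τ)² - r²)`,
`r = |x - y|`. The substitution `u = a (t - τ)` turns this into `a⁻¹ ∫_r^{at} du / √(u² - r²)`,
and `u ↦ arcosh (u / r)` is an antiderivative of the integrand that vanishes at `u = r`; the
logarithm in the bound is `arcosh (a t / r) = log (a t / r + √((a t / r)² - 1))`.
The singularity at `u = r` is integrable because the integrand is the nonnegative derivative of
a function continuous up to the endpoint.
-/

open Set intervalIntegral

lemma sqrt_sq_sub_sq_eq_mul_sqrt {u r : ℝ} (hr : 0 < r) :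
    √(u ^ 2 - r ^ 2) = r * √((u / r) ^ 2 - 1) := by
  rw [show u ^ 2 - r ^ 2 = r ^ 2 * ((u / r) ^ 2 - 1) by field_simp, sqrt_mul (sq_nonneg r),
    sqrt_sq hr.le]

lemma hasDerivAt_arcosh_div {r u : ℝ} (hr : 0 < r) (hu : r < u) :
    HasDerivAt (fun u ↦ arcosh (u / r)) (√(u ^ 2 - r ^ 2))⁻¹ u := by
  have h := (hasDerivAt_arcosh (one_lt_div hr |>.mpr hu)).comp u ((hasDerivAt_id u).div_const r)
  refine h.congr_deriv ?_
  rw [sqrt_sq_sub_sq_eq_mul_sqrt hr, mul_inv, mul_one_div, inv_mul_eq_div]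

lemma continuousOn_arcosh_div {r U : ℝ} (hr : 0 < r) :
    ContinuousOn (fun u ↦ arcosh (u / r)) (Icc r U) :=
  continuousOn_arcosh.comp (continuousOn_id.div_const r)
    fun _ hu ↦ (one_le_div hr).mpr hu.1

lemma intervalIntegrable_inv_sqrt_sq_sub_sq {r U : ℝ} (hr : 0 < r) (hU : r ≤ U) :
    IntervalIntegrable (fun u ↦ (√(u ^ 2 - r ^ 2))⁻¹) volume r U := by
  apply intervalIntegrable_deriv_of_nonneg (g := fun u ↦ arcosh (u / r))
  · simpa only [uIcc_of_le hU] using continuousOn_arcosh_div hr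
  · simp only [min_eq_left hU, max_eq_right hU]
    exact fun u hu ↦ hasDerivAt_arcosh_div hr hu.1
  · exact fun u _ ↦ inv_nonneg.mpr (sqrt_nonneg _)

lemma integral_inv_sqrt_sq_sub_sq {r U : ℝ} (hr : 0 < r) (hU : r ≤ U) :
    ∫ u in r..U, (√(u ^ 2 - r ^ 2))⁻¹ = arcosh (U / r) := by
  rw [integral_eq_sub_of_hasDeriv_right_of_le hU (continuousOn_arcosh_div hr)
    (fun u hu ↦ (hasDerivAt_arcosh_div hr hu.1).hasDerivWithinAt)
    (intervalIntegrable_inv_sqrt_sq_sub_sq hr hU), div_self hr.ne', arcosh_zero, sub_zero]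

lemma intervalIntegrable_inv_sqrt_mul_sq_sub_sq {a r t : ℝ} (ha : 0 < a) (hr : 0 < r)
    (hrt : r ≤ a * t) :
    IntervalIntegrable (fun τ ↦ (√(a ^ 2 * (t - τ) ^ 2 - r ^ 2))⁻¹) volume 0 (t - r / a) := by
  have h := ((intervalIntegrable_inv_sqrt_sq_sub_sq hr hrt).comp_sub_left (a * t)).comp_mul_left
    (c := a)
  rw [sub_self, zero_div, sub_div, mul_div_cancel_left₀ t ha.ne'] at h
  simpa only [← mul_pow, mul_sub] using h.symm

lemma integral_inv_sqrt_mul_sq_sub_sq {a r t : ℝ} (ha : 0 < a) (hr : 0 < r) (hrt : r ≤ a * t) :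
    ∫ τ in 0..t - r / a, (√(a ^ 2 * (t - τ) ^ 2 - r ^ 2))⁻¹ = a⁻¹ * arcosh (a * t / r) := by
  simp only [← mul_pow, mul_sub]
  rw [integral_comp_sub_mul (fun u ↦ (√(u ^ 2 - r ^ 2))⁻¹) ha.ne', mul_zero, sub_zero, mul_sub,
    mul_div_cancel₀ r ha.ne', sub_sub_cancel, integral_inv_sqrt_sq_sub_sq hr hrt, smul_eq_mul]

lemma abs_integral_div_le_mul_integral_inv {f g : ℝ → ℝ} {a b C : ℝ} (hab : a ≤ b)
    (hf : ∀ x ∈ Ioc a b, |f x| ≤ C) (hg : ∀ x ∈ Ioc a b, 0 ≤ g x)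
    (hint : IntervalIntegrable (fun x ↦ (g x)⁻¹) volume a b) :
    |∫ x in a..b, f x / g x| ≤ C * ∫ x in a..b, (g x)⁻¹ := by
  rw [← intervalIntegral.integral_const_mul, ← norm_eq_abs]
  refine norm_integral_le_of_norm_le hab (Filter.Eventually.of_forall fun x hx ↦ ?_)
    (hint.const_mul C)
  rw [norm_div, norm_eq_abs, norm_eq_abs, abs_of_nonneg (hg x hx), div_eq_mul_inv]
  exact mul_le_mul_of_nonneg_right (hf x hx) (inv_nonneg.mpr (hg x hx))

theorem waveKernel_log_bound_general
    (a : ℝ) (ha : 0 < a) (σ : EuclideanSpace ℝ (Fin 2) → ℝ → ℝ) (C₀ : ℝ)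
    (hσ_bdd : ∀ x : EuclideanSpace ℝ (Fin 2), ∀ t : ℝ, 0 ≤ t → |σ x t| ≤ C₀)
    (x y : EuclideanSpace ℝ (Fin 2)) (t : ℝ)
    (h0 : 0 < dist x y) (hlt : dist x y < a * t) :
    |waveKernel a σ x y t| ≤
      (C₀ / (2 * Real.pi * a ^ 2)) *
        Real.log (a * t / dist x y + Real.sqrt ((a * t / dist x y) ^ 2 - 1)) := by
  have hb : 0 ≤ t - dist x y / a := by
    rw [sub_nonneg, div_le_iff₀ ha, mul_comm]; exact hlt.le
  have hI := abs_integral_div_le_mul_integral_inv hb (fun τ hτ ↦ hσ_bdd y τ hτ.1.le)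
    (fun τ _ ↦ sqrt_nonneg _) (intervalIntegrable_inv_sqrt_mul_sq_sub_sq ha h0 hlt.le)
  rw [integral_inv_sqrt_mul_sq_sub_sq ha h0 hlt.le] at hI
  rw [waveKernel, if_pos hlt, abs_mul, abs_of_pos (by positivity)]
  calc 1 / (2 * π * a) * |∫ τ in 0..t - dist x y / a,
          σ y τ / √(a ^ 2 * (t - τ) ^ 2 - dist x y ^ 2)|
      ≤ 1 / (2 * π * a) * (C₀ * (a⁻¹ * arcosh (a * t / dist x y))) := by gcongr
    _ = _ := by rw [arcosh]; field_simp

/-- Logarithmic bound for the planar wave kernel under a boundedness assumption on `σ`. -/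
theorem waveKernel_log_bound
    (a : ℝ) (ha : 0 < a) (σ : EuclideanSpace ℝ (Fin 2) → ℝ → ℝ) (C₀ : ℝ)
    (hσ_bdd : ∀ x : EuclideanSpace ℝ (Fin 2), ∀ t : ℝ, 0 ≤ t → |σ x t| ≤ C₀)
    (x y : EuclideanSpace ℝ (Fin 2)) (t : ℝ) (ht : 0 < t)
    (h0 : 0 < dist x y) (hlt : dist x y < a * t) :
    |waveKernel a σ x y t| ≤
      (C₀ / (2 * Real.pi * a ^ 2)) *
        Real.log (a * t / dist x y + Real.sqrt ((a * t / dist x y) ^ 2 - 1)) :=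
  waveKernel_log_bound_general a ha σ C₀ hσ_bdd x y t h0 hlt
end

section
/- Let a > 0 and 0 < r < a t₁ < a t₂. Then ∫_{t₁}^{t₂} ds / √(a² s² − r²) ≤ √( 2 (t₂ − t₁) / (a r) ). -/
/-!
For `s ≥ t₁` one has `a²s² - r² = (as - r)(as + r) ≥ 2r (as - r)`, so the integrand is at most
`(2r)^{-1/2} (as - r)^{-1/2}`, whose integral is `(2 / a) (2r)^{-1/2} (√(at₂ - r) - √(at₁ - r))`.
Subadditivity of the square root bounds the difference of square roots by `√(a (t₂ - t₁))`.
-/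

open Real Set

theorem sqrt_sub_sqrt_le_sqrt_sub (x y : ℝ) : √y - √x ≤ √(y - x) := by
  rcases le_total y x with hyx | hxy
  · exact (sub_nonpos.2 (sqrt_le_sqrt hyx)).trans (sqrt_nonneg _)
  rcases le_total x 0 with hx | hx
  · rw [sqrt_eq_zero_of_nonpos hx, sub_zero]
    exact sqrt_le_sqrt (by linarith)
  rw [sub_le_iff_le_add, sqrt_le_left (by positivity)]
  nlinarith [sq_sqrt hx, sq_sqrt (sub_nonneg.2 hxy), sqrt_nonneg x, sqrt_nonneg (y - x)]

theorem one_div_sqrt_sq_sub_sq_le {x r : ℝ} (hr : 0 < r) (hx : r < x) :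
    1 / √(x ^ 2 - r ^ 2) ≤ 1 / √(2 * r) * (1 / √(x - r)) := by
  rw [one_div_mul_one_div, ← sqrt_mul (by positivity)]
  gcongr
  nlinarith

theorem intervalIntegrable_one_div_sqrt {f : ℝ → ℝ} {a b : ℝ} (hf : ContinuousOn f (uIcc a b))
    (hpos : ∀ x ∈ uIcc a b, 0 < f x) :
    IntervalIntegrable (fun x => 1 / √(f x)) MeasureTheory.volume a b :=
  (continuousOn_const.div hf.sqrt fun x hx => (sqrt_pos.2 (hpos x hx)).ne').intervalIntegrable

theorem hasDerivAt_sqrt_mul_sub {a r s : ℝ} (ha : a ≠ 0) (hs : r < a * s) :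
    HasDerivAt (fun s => 2 / a * √(a * s - r)) (1 / √(a * s - r)) s := by
  have hpos : 0 < √(a * s - r) := sqrt_pos.2 (sub_pos.2 hs)
  refine ((((hasDerivAt_id' s).const_mul a).sub_const r).sqrt (sub_pos.2 hs).ne'
    |>.const_mul (2 / a)).congr_deriv ?_
  field_simp

theorem integral_one_div_sqrt_mul_sub {a r t₁ t₂ : ℝ} (ha : a ≠ 0)
    (h : ∀ s ∈ uIcc t₁ t₂, r < a * s) :
    ∫ s in t₁..t₂, 1 / √(a * s - r) = 2 / a * (√(a * t₂ - r) - √(a * t₁ - r)) := by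
  rw [mul_sub]
  exact intervalIntegral.integral_eq_sub_of_hasDerivAt
    (fun s hs => hasDerivAt_sqrt_mul_sub ha (h s hs))
    (intervalIntegrable_one_div_sqrt (by fun_prop) fun s hs => sub_pos.2 (h s hs))

/-- For `a > 0` and `0 < r < a t₁ < a t₂`:
`∫_{t₁}^{t₂} ds/√(a²s² - r²) ≤ √(2(t₂ - t₁)/(a r))`. -/
theorem integral_inv_sqrt_bound_away_from_singularity
    (a t₁ t₂ r : ℝ) (ha : 0 < a) (hr : 0 < r)
    (h₁ : r < a * t₁) (h₂ : a * t₁ < a * t₂) :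
    ∫ s in t₁..t₂, 1 / Real.sqrt (a ^ 2 * s ^ 2 - r ^ 2)
      ≤ Real.sqrt (2 * (t₂ - t₁) / (a * r)) := by
  have ht : t₁ ≤ t₂ := (lt_of_mul_lt_mul_left h₂ ha.le).le
  have hlt : ∀ s ∈ uIcc t₁ t₂, r < a * s := fun s hs =>
    h₁.trans_le (mul_le_mul_of_nonneg_left (uIcc_of_le ht ▸ hs).1 ha.le)
  have hint : IntervalIntegrable (fun s => 1 / √(a * s - r)) MeasureTheory.volume t₁ t₂ :=
    intervalIntegrable_one_div_sqrt (by fun_prop) fun s hs => sub_pos.2 (hlt s hs)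
  calc ∫ s in t₁..t₂, 1 / √(a ^ 2 * s ^ 2 - r ^ 2)
      ≤ ∫ s in t₁..t₂, 1 / √(2 * r) * (1 / √(a * s - r)) := by
        refine intervalIntegral.integral_mono_on ht ?_ (hint.const_mul _) fun s hs => ?_
        · refine intervalIntegrable_one_div_sqrt (by fun_prop) fun s hs => ?_
          rw [← mul_pow, sub_pos]
          exact pow_lt_pow_left₀ (hlt s hs) hr.le two_ne_zero
        · rw [← mul_pow]
          exact one_div_sqrt_sq_sub_sq_le hr (hlt s (Icc_subset_uIcc hs))
    _ = 1 / √(2 * r) * (2 / a * (√(a * t₂ - r) - √(a * t₁ - r))) := by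
        rw [intervalIntegral.integral_const_mul, integral_one_div_sqrt_mul_sub ha.ne' hlt]
    _ ≤ 1 / √(2 * r) * (2 / a * √(a * (t₂ - t₁))) := by
        gcongr
        exact (sqrt_sub_sqrt_le_sqrt_sub _ _).trans_eq (by ring_nf)
    _ = √(2 * (t₂ - t₁) / (a * r)) := by
        rw [← sqrt_sq (by positivity : 0 ≤ 1 / √(2 * r) * (2 / a * √(a * (t₂ - t₁))))]
        congr 1
        rw [mul_pow, mul_pow, div_pow, div_pow, sq_sqrt (by positivity), sq_sqrt (by nlinarith)]
        field_simp
end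

section
/- Let a > 0, T > 0, let γ ∈ (0,1], set β = min(γ, 1/2), and let σ : ℝ² × [0,∞) → ℝ satisfy |σ(x,t)| ≤ C₀ for all x, t, and |σ(x,t) − σ(x,s)| ≤ |t−s|^γ for all x, t, s. Then there is a constant C (depending only on a, C₀, γ, T) such that for all x, y ∈ ℝ² with x ≠ y, all h ∈ (0,1], and all t₁, t₂ ∈ [0,T] with 0 < t₂ − t₁ < h: |G(x,y,t₁) − G(x,y,t₂)|² ≤ C h^{2β} / |x−y| whenever |x−y| < a T, and G(x,y,t₁) = G(x,y,t₂) = 0 whenever |x−y| ≥ a T. -/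
open MeasureTheory Real

/-!
Write `r = |x - y|`, `ρ = r / a` and `k(u) = (a²u² - r²)^(-1/2)`, so that
`G(x,y,t) = (2πa)⁻¹ ∫₀^{t-ρ} σ(y,τ) k(t-τ) dτ` for `t > ρ` and `G = 0` otherwise.
From `a²u² - r² ≥ 2ar(u - ρ)` for `u ≥ ρ`, the profile `k` is decreasing on `(ρ, ∞)` and
`∫_ρ^{ρ+δ} k ≤ √(2δ/(ar))`.

For `t₁ < t₂` and `δ = t₂ - t₁`, the difference `G(t₁) - G(t₂)` splits into
`∫₀^{t₁-ρ} σ(y,τ) (k(t₁-τ) - k(t₂-τ)) dτ` and `∫_{t₁-ρ}^{t₂-ρ} σ(y,τ) k(t₂-τ) dτ`.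
The integrand of the first has `k(t₁-τ) - k(t₂-τ) ≥ 0`, and the substitution `u = t - τ`
turns its bound into `C₀ (∫_ρ^{t₁} k - ∫_{ρ+δ}^{t₂} k) ≤ C₀ ∫_ρ^{ρ+δ} k`; the second is
bounded by the same quantity. Hence `|G(t₁) - G(t₂)|² ≤ 2C₀²δ / (π²a³r)`, and `δ < h ≤ h^{2β}`
since `2β ≤ 1`.
-/

open Set intervalIntegral

noncomputable def waveProfile (a r u : ℝ) : ℝ := (√(a ^ 2 * u ^ 2 - r ^ 2))⁻¹

section WaveProfile

variable {a r u : ℝ}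

lemma waveProfile_nonneg : 0 ≤ waveProfile a r u := inv_nonneg.2 (sqrt_nonneg _)

lemma two_mul_mul_sub_div_le_sq_sub_sq (ha : 0 < a) (hr : 0 ≤ r) (hu : r / a ≤ u) :
    2 * a * r * (u - r / a) ≤ a ^ 2 * u ^ 2 - r ^ 2 := by
  have hfac : a * (u - r / a) = a * u - r := by field_simp
  have hau : r ≤ a * u := by rwa [div_le_iff₀ ha, mul_comm] at hu
  nlinarith

lemma waveProfile_le (ha : 0 < a) (hr : 0 < r) (hu : r / a < u) :
    waveProfile a r u ≤ (√(2 * a * r))⁻¹ * (√(u - r / a))⁻¹ := by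
  rw [waveProfile, ← mul_inv, ← sqrt_mul (by positivity)]
  exact inv_anti₀ (sqrt_pos.2 (by have := sub_pos.2 hu; positivity))
    (sqrt_le_sqrt (two_mul_mul_sub_div_le_sq_sub_sq ha hr.le hu.le))

lemma waveProfile_antitoneOn (ha : 0 < a) (hr : 0 ≤ r) :
    AntitoneOn (waveProfile a r) (Ioi (r / a)) := by
  intro u hu v hv huv
  have hau : r < a * u := by rwa [mem_Ioi, div_lt_iff₀ ha, mul_comm] at hu
  have hav : a * u ≤ a * v := mul_le_mul_of_nonneg_left huv ha.le
  exact inv_anti₀ (sqrt_pos.2 (by nlinarith)) (sqrt_le_sqrt (by nlinarith))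

lemma inv_sqrt_eq_rpow {u : ℝ} (hu : 0 ≤ u) : (√u)⁻¹ = u ^ (-(1 / 2) : ℝ) := by
  rw [sqrt_eq_rpow, rpow_neg hu]

lemma intervalIntegrable_inv_sqrt_sub {c b : ℝ} (hcb : c ≤ b) :
    IntervalIntegrable (fun u => (√(u - c))⁻¹) volume c b := by
  have hint : IntervalIntegrable (fun u => (√u)⁻¹) volume 0 (b - c) :=
    (intervalIntegrable_rpow' (r := -(1 / 2)) (by norm_num)).congr fun u hu => by
      rw [uIoc_of_le (sub_nonneg.2 hcb)] at hu
      exact (inv_sqrt_eq_rpow hu.1.le).symm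
  simpa using hint.comp_sub_right c

lemma integral_inv_sqrt_sub (c : ℝ) {δ : ℝ} (hδ : 0 ≤ δ) :
    ∫ u in c..c + δ, (√(u - c))⁻¹ = 2 * √δ := by
  rw [integral_comp_sub_right (fun u => (√u)⁻¹), sub_self, add_sub_cancel_left,
    integral_congr fun u hu => inv_sqrt_eq_rpow (by rw [uIcc_of_le hδ] at hu; exact hu.1),
    integral_rpow (Or.inl (by norm_num)), sqrt_eq_rpow]
  norm_num
  ring

lemma intervalIntegrable_waveProfile (ha : 0 < a) (hr : 0 < r) {b : ℝ} (hb : r / a ≤ b) :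
    IntervalIntegrable (waveProfile a r) volume (r / a) b := by
  refine ((intervalIntegrable_inv_sqrt_sub hb).const_mul (√(2 * a * r))⁻¹).mono_fun'
    (Measurable.aestronglyMeasurable (by unfold waveProfile; fun_prop)) ?_
  rw [uIoc_of_le hb, Filter.EventuallyLE, ae_restrict_iff' measurableSet_Ioc]
  exact Filter.Eventually.of_forall fun u hu => by
    rw [norm_of_nonneg waveProfile_nonneg]; exact waveProfile_le ha hr hu.1

lemma integral_waveProfile_le (ha : 0 < a) (hr : 0 < r) {δ : ℝ} (hδ : 0 ≤ δ) :
    ∫ u in r / a..r / a + δ, waveProfile a r u ≤ √(2 * δ / (a * r)) := by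
  calc ∫ u in r / a..r / a + δ, waveProfile a r u
      ≤ ∫ u in r / a..r / a + δ, (√(2 * a * r))⁻¹ * (√(u - r / a))⁻¹ := by
        refine integral_mono_ae_restrict (by linarith)
          (intervalIntegrable_waveProfile ha hr (by linarith))
          ((intervalIntegrable_inv_sqrt_sub (by linarith)).const_mul _) ?_
        filter_upwards [ae_restrict_mem measurableSet_Icc,
          ae_restrict_of_ae (volume.ae_ne (r / a))] with u hu hne
        exact waveProfile_le ha hr (lt_of_le_of_ne hu.1 hne.symm)
    _ = √(2 * δ / (a * r)) := by
        rw [intervalIntegral.integral_const_mul, integral_inv_sqrt_sub _ hδ,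
          show 2 * δ / (a * r) = 2 ^ 2 * δ / (2 * a * r) by field_simp,
          sqrt_div' _ (by positivity), sqrt_mul' _ hδ, sqrt_sq zero_le_two]
        ring

end WaveProfile

noncomputable def retardedIntegral (g k : ℝ → ℝ) (ρ t : ℝ) : ℝ :=
  if ρ < t then ∫ τ in (0 : ℝ)..t - ρ, g τ * k (t - τ) else 0

section RetardedIntegral

variable {g k : ℝ → ℝ} {C₀ ρ t : ℝ}

lemma intervalIntegrable_mul_comp_sub (hg_meas : AEStronglyMeasurable g (volume.restrict (Ici 0)))
    (hg_bdd : ∀ τ, 0 ≤ τ → |g τ| ≤ C₀) (hk : IntervalIntegrable k volume ρ t) (hρt : ρ ≤ t) :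
    IntervalIntegrable (fun τ => g τ * k (t - τ)) volume 0 (t - ρ) := by
  have hk' : IntervalIntegrable (fun τ => k (t - τ)) volume 0 (t - ρ) := by
    simpa using (hk.comp_sub_left t).symm
  rw [intervalIntegrable_iff_integrableOn_Ioc_of_le (sub_nonneg.2 hρt)] at hk' ⊢
  have hsub : Ioc 0 (t - ρ) ⊆ Ici 0 := fun τ hτ => mem_Ici.2 hτ.1.le
  refine hk'.bdd_mul (c := C₀) (hg_meas.mono_measure (Measure.restrict_mono hsub le_rfl))
    ((ae_restrict_iff' measurableSet_Ioc).2 (Filter.Eventually.of_forall fun τ hτ => ?_))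
  exact (norm_eq_abs (g τ)).le.trans (hg_bdd τ (hsub hτ))

lemma abs_integral_mul_comp_sub_le (hg_bdd : ∀ τ, 0 ≤ τ → |g τ| ≤ C₀) (hk_nonneg : ∀ u, 0 ≤ k u)
    {c d : ℝ} (hc : 0 ≤ c) (hcd : c ≤ d) (hk : IntervalIntegrable k volume (t - d) (t - c)) :
    |∫ τ in c..d, g τ * k (t - τ)| ≤ C₀ * ∫ u in t - d..t - c, k u := by
  have hk' : IntervalIntegrable (fun τ => k (t - τ)) volume c d := by
    simpa using (hk.comp_sub_left t).symm
  rw [← integral_comp_sub_left, ← intervalIntegral.integral_const_mul, ← norm_eq_abs]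
  refine norm_integral_le_of_norm_le hcd (Filter.Eventually.of_forall fun τ hτ => ?_)
    (hk'.const_mul C₀)
  rw [norm_mul, norm_of_nonneg (hk_nonneg _), norm_eq_abs]
  exact mul_le_mul_of_nonneg_right (hg_bdd τ (hc.trans hτ.1.le)) (hk_nonneg _)

lemma integral_sub_integral_shift_le (hk_nonneg : ∀ u, 0 ≤ k u) {t₁ t₂ : ℝ}
    (hk : IntervalIntegrable k volume ρ t₂) (hρ : ρ ≤ t₁) (ht : t₁ ≤ t₂) :
    (∫ u in ρ..t₁, k u) - ∫ u in ρ + (t₂ - t₁)..t₂, k u ≤ ∫ u in ρ..ρ + (t₂ - t₁), k u := by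
  have hsub : ∀ {c d}, c ∈ uIcc ρ t₂ → d ∈ uIcc ρ t₂ → IntervalIntegrable k volume c d :=
    fun hc hd => hk.mono_set (uIcc_subset_uIcc hc hd)
  rw [integral_interval_sub_interval_comm (hsub left_mem_uIcc (mem_uIcc_of_le hρ ht))
    (hsub (mem_uIcc_of_le (by linarith) (by linarith)) right_mem_uIcc)
    (hsub left_mem_uIcc (mem_uIcc_of_le (by linarith) (by linarith)))]
  linarith [integral_nonneg (μ := volume) ht fun u _ => hk_nonneg u]

lemma abs_integral_mul_sub_comp_sub_le (hg_bdd : ∀ τ, 0 ≤ τ → |g τ| ≤ C₀)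
    (hk_nonneg : ∀ u, 0 ≤ k u) (hk_anti : AntitoneOn k (Ioi ρ)) {t₁ t₂ : ℝ}
    (hk : IntervalIntegrable k volume ρ t₂) (hρ : ρ ≤ t₁) (ht : t₁ ≤ t₂) :
    |∫ τ in (0 : ℝ)..t₁ - ρ, g τ * (k (t₁ - τ) - k (t₂ - τ))|
      ≤ C₀ * ∫ u in ρ..ρ + (t₂ - t₁), k u := by
  have hC₀ : 0 ≤ C₀ := (abs_nonneg _).trans (hg_bdd 0 le_rfl)
  have hshift : t₂ - (t₁ - ρ) = ρ + (t₂ - t₁) := by ring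
  have hk₁ : IntervalIntegrable (fun τ => k (t₁ - τ)) volume 0 (t₁ - ρ) := by
    have := (hk.mono_set (uIcc_subset_uIcc left_mem_uIcc (mem_uIcc_of_le hρ ht))).comp_sub_left
      t₁
    rw [sub_self] at this
    exact this.symm
  have hk₂ : IntervalIntegrable (fun τ => k (t₂ - τ)) volume 0 (t₁ - ρ) := by
    have := (hk.mono_set (uIcc_subset_uIcc (mem_uIcc_of_le (x := ρ + (t₂ - t₁)) (by linarith)
      (by linarith)) right_mem_uIcc)).comp_sub_left t₂
    rw [← hshift, sub_sub_cancel, sub_self] at this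
    exact this.symm
  have hbound : ∀ᵐ τ, τ ∈ Ioc 0 (t₁ - ρ) →
      ‖g τ * (k (t₁ - τ) - k (t₂ - τ))‖ ≤ C₀ * (k (t₁ - τ) - k (t₂ - τ)) := by
    filter_upwards [volume.ae_ne (t₁ - ρ)] with τ hne hτ
    have hmono : k (t₂ - τ) ≤ k (t₁ - τ) :=
      hk_anti (show ρ < t₁ - τ by have := lt_of_le_of_ne hτ.2 hne; linarith)
        (show ρ < t₂ - τ by have := lt_of_le_of_ne hτ.2 hne; linarith) (by linarith)
    rw [norm_mul, norm_of_nonneg (sub_nonneg.2 hmono), norm_eq_abs]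
    exact mul_le_mul_of_nonneg_right (hg_bdd τ hτ.1.le) (sub_nonneg.2 hmono)
  rw [← norm_eq_abs]
  refine (norm_integral_le_of_norm_le (sub_nonneg.2 hρ) hbound
    ((hk₁.sub hk₂).const_mul C₀)).trans ?_
  rw [intervalIntegral.integral_const_mul, integral_sub hk₁ hk₂, integral_comp_sub_left,
    integral_comp_sub_left, sub_zero, sub_zero, sub_sub_cancel, hshift]
  exact mul_le_mul_of_nonneg_left (integral_sub_integral_shift_le hk_nonneg hk hρ ht) hC₀

lemma abs_integral_sub_integral_mul_comp_sub_le
    (hg_meas : AEStronglyMeasurable g (volume.restrict (Ici 0)))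
    (hg_bdd : ∀ τ, 0 ≤ τ → |g τ| ≤ C₀) (hk_nonneg : ∀ u, 0 ≤ k u)
    (hk_anti : AntitoneOn k (Ioi ρ)) {t₁ t₂ : ℝ} (hk : IntervalIntegrable k volume ρ t₂)
    (hρ : ρ ≤ t₁) (ht : t₁ ≤ t₂) :
    |(∫ τ in (0 : ℝ)..t₁ - ρ, g τ * k (t₁ - τ)) - ∫ τ in (0 : ℝ)..t₂ - ρ, g τ * k (t₂ - τ)|
      ≤ 2 * C₀ * ∫ u in ρ..ρ + (t₂ - t₁), k u := by
  have hshift : t₂ - (t₁ - ρ) = ρ + (t₂ - t₁) := by ring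
  have hs : t₁ - ρ ∈ uIcc 0 (t₂ - ρ) := mem_uIcc_of_le (by linarith) (by linarith)
  have hi₁ := intervalIntegrable_mul_comp_sub hg_meas hg_bdd
    (hk.mono_set (uIcc_subset_uIcc left_mem_uIcc (mem_uIcc_of_le hρ ht))) hρ
  have hi₂ := intervalIntegrable_mul_comp_sub hg_meas hg_bdd hk (hρ.trans ht)
  have hi₂₁ := hi₂.mono_set (uIcc_subset_uIcc left_mem_uIcc hs)
  have hi₂₂ := hi₂.mono_set (uIcc_subset_uIcc hs right_mem_uIcc)
  have hsplit :
      (∫ τ in (0 : ℝ)..t₁ - ρ, g τ * k (t₁ - τ)) - ∫ τ in (0 : ℝ)..t₂ - ρ, g τ * k (t₂ - τ)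
      = (∫ τ in (0 : ℝ)..t₁ - ρ, g τ * (k (t₁ - τ) - k (t₂ - τ)))
        - ∫ τ in t₁ - ρ..t₂ - ρ, g τ * k (t₂ - τ) := by
    simp_rw [mul_sub]
    rw [integral_sub hi₁ hi₂₁, ← integral_add_adjacent_intervals hi₂₁ hi₂₂]
    ring
  have hlate := abs_integral_mul_comp_sub_le (t := t₂) hg_bdd hk_nonneg (sub_nonneg.2 hρ)
    (sub_le_sub_right ht ρ) (by
      rw [sub_sub_cancel, hshift]
      exact hk.mono_set (uIcc_subset_uIcc left_mem_uIcc
        (mem_uIcc_of_le (by linarith) (by linarith))))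
  rw [sub_sub_cancel, hshift] at hlate
  rw [hsplit]
  calc _ ≤ _ + _ := abs_sub _ _
    _ ≤ C₀ * (∫ u in ρ..ρ + (t₂ - t₁), k u) + C₀ * ∫ u in ρ..ρ + (t₂ - t₁), k u :=
        add_le_add (abs_integral_mul_sub_comp_sub_le hg_bdd hk_nonneg hk_anti hk hρ ht) hlate
    _ = 2 * C₀ * ∫ u in ρ..ρ + (t₂ - t₁), k u := by ring

lemma abs_retardedIntegral_sub_le (hg_meas : AEStronglyMeasurable g (volume.restrict (Ici 0)))
    (hg_bdd : ∀ τ, 0 ≤ τ → |g τ| ≤ C₀) (hk_nonneg : ∀ u, 0 ≤ k u)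
    (hk_anti : AntitoneOn k (Ioi ρ)) (hk : ∀ b, ρ ≤ b → IntervalIntegrable k volume ρ b)
    {t₁ t₂ : ℝ} (ht : t₁ ≤ t₂) :
    |retardedIntegral g k ρ t₁ - retardedIntegral g k ρ t₂|
      ≤ 2 * C₀ * ∫ u in ρ..ρ + (t₂ - t₁), k u := by
  have hC₀ : 0 ≤ C₀ := (abs_nonneg _).trans (hg_bdd 0 le_rfl)
  have hJ : 0 ≤ ∫ u in ρ..ρ + (t₂ - t₁), k u :=
    integral_nonneg (by linarith) fun u _ => hk_nonneg u
  unfold retardedIntegral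
  split_ifs with h₁ h₂ h₂
  · exact abs_integral_sub_integral_mul_comp_sub_le hg_meas hg_bdd hk_nonneg hk_anti
      (hk t₂ (by linarith)) h₁.le ht
  · exact absurd (h₁.trans_le ht) h₂
  · have hI₂ := abs_integral_mul_comp_sub_le (t := t₂) hg_bdd hk_nonneg le_rfl
      (sub_nonneg.2 h₂.le) (by simpa using hk t₂ h₂.le)
    rw [sub_sub_cancel, sub_zero] at hI₂
    rw [zero_sub, abs_neg]
    calc _ ≤ C₀ * ∫ u in ρ..t₂, k u := hI₂
      _ ≤ C₀ * ∫ u in ρ..ρ + (t₂ - t₁), k u := by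
          gcongr
          exact integral_mono_interval le_rfl h₂.le (by linarith)
            (Filter.Eventually.of_forall hk_nonneg) (hk _ (by linarith))
      _ ≤ 2 * C₀ * ∫ u in ρ..ρ + (t₂ - t₁), k u := by nlinarith
  · rw [sub_self, abs_zero]
    positivity

end RetardedIntegral

section WaveKernel

variable {a C₀ : ℝ} {σ : EuclideanSpace ℝ (Fin 2) → ℝ → ℝ} {x y : EuclideanSpace ℝ (Fin 2)}

lemma waveKernel_eq_retardedIntegral (ha : 0 < a) (t : ℝ) :
    waveKernel a σ x y t
      = 1 / (2 * π * a) * retardedIntegral (σ y) (waveProfile a (dist x y)) (dist x y / a) t := by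
  simp only [waveKernel, retardedIntegral, div_lt_iff₀ ha, mul_comm t a, mul_ite, mul_zero]
  simp only [waveProfile, div_eq_mul_inv]

lemma waveKernel_eq_zero_of_le {t : ℝ} (h : a * t ≤ dist x y) : waveKernel a σ x y t = 0 :=
  if_neg h.not_gt

lemma abs_waveKernel_sub_le (ha : 0 < a) (hxy : x ≠ y)
    (hσ_meas : AEStronglyMeasurable (σ y) (volume.restrict (Ici 0)))
    (hσ_bdd : ∀ τ, 0 ≤ τ → |σ y τ| ≤ C₀) {t₁ t₂ : ℝ} (ht : t₁ ≤ t₂) :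
    |waveKernel a σ x y t₁ - waveKernel a σ x y t₂|
      ≤ C₀ / (π * a) * √(2 * (t₂ - t₁) / (a * dist x y)) := by
  have hr : 0 < dist x y := dist_pos.2 hxy
  have hC₀ : 0 ≤ C₀ := (abs_nonneg _).trans (hσ_bdd 0 le_rfl)
  rw [waveKernel_eq_retardedIntegral ha, waveKernel_eq_retardedIntegral ha, ← mul_sub, abs_mul,
    abs_of_pos (by positivity)]
  calc _ ≤ 1 / (2 * π * a) * (2 * C₀ * √(2 * (t₂ - t₁) / (a * dist x y))) := by
        gcongr
        refine (abs_retardedIntegral_sub_le hσ_meas hσ_bdd (fun _ => waveProfile_nonneg)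
          (waveProfile_antitoneOn ha hr.le) (fun b hb => intervalIntegrable_waveProfile ha hr hb)
          ht).trans ?_
        gcongr
        exact integral_waveProfile_le ha hr (sub_nonneg.2 ht)
    _ = C₀ / (π * a) * √(2 * (t₂ - t₁) / (a * dist x y)) := by
        field_simp

end WaveKernel

lemma holderOnWith_one_of_abs_sub_le_rpow {f : ℝ → ℝ} {s : Set ℝ} {γ : NNReal}
    (hf : ∀ x ∈ s, ∀ y ∈ s, |f x - f y| ≤ |x - y| ^ (γ : ℝ)) : HolderOnWith 1 γ f s := by
  intro x hx y hy
  rw [edist_dist, edist_dist, Real.dist_eq, Real.dist_eq, ENNReal.coe_one, one_mul]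
  exact (ENNReal.ofReal_le_ofReal (hf x hx y hy)).trans_eq
    (ENNReal.ofReal_rpow_of_nonneg (abs_nonneg _) γ.2).symm

theorem waveKernel_squared_increment_bound_general
    (a T : ℝ) (ha : 0 < a)
    (γ : ℝ) (hγ : γ ∈ Set.Ioc (0 : ℝ) 1) (β : ℝ) (hβ : β = min γ (1 / 2))
    (σ : EuclideanSpace ℝ (Fin 2) → ℝ → ℝ) (C₀ : ℝ)
    (hσ_bdd : ∀ x : EuclideanSpace ℝ (Fin 2), ∀ t : ℝ, 0 ≤ t → |σ x t| ≤ C₀)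
    (hσ_hold : ∀ x : EuclideanSpace ℝ (Fin 2), ∀ t s : ℝ, 0 ≤ t → 0 ≤ s →
      |σ x t - σ x s| ≤ |t - s| ^ γ) :
    ∃ C : ℝ, 0 < C ∧
      ∀ (x y : EuclideanSpace ℝ (Fin 2)) (h t₁ t₂ : ℝ),
        x ≠ y → h ∈ Set.Ioc (0 : ℝ) 1 →
        t₁ ∈ Set.Icc (0 : ℝ) T → t₂ ∈ Set.Icc (0 : ℝ) T →
        0 < t₂ - t₁ → t₂ - t₁ < h →
        (dist x y < a * T →
          |waveKernel a σ x y t₁ - waveKernel a σ x y t₂| ^ 2 ≤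
            C * h ^ (2 * β) / dist x y) ∧
        (a * T ≤ dist x y →
          waveKernel a σ x y t₁ = 0 ∧ waveKernel a σ x y t₂ = 0) := by
  set K := 2 * C₀ ^ 2 / (π ^ 2 * a ^ 3) with hK
  refine ⟨K + 1, by positivity,
    fun x y h t₁ t₂ hxy hh ht₁ ht₂ hδ hδh => ⟨fun _ => ?_, fun hfar => ?_⟩⟩
  · have hr : 0 < dist x y := dist_pos.2 hxy
    have hσ_meas : AEStronglyMeasurable (σ y) (volume.restrict (Ici 0)) :=
      ((holderOnWith_one_of_abs_sub_le_rpow (γ := ⟨γ, hγ.1.le⟩) fun t ht s hs =>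
        hσ_hold y t s ht hs).continuousOn hγ.1).aestronglyMeasurable measurableSet_Ici
    have hh_le : h ≤ h ^ (2 * β) := by
      simpa using rpow_le_rpow_of_exponent_ge hh.1 hh.2 (show 2 * β ≤ 1 by
        rw [hβ]; linarith [min_le_right γ (1 / 2)])
    calc _ ≤ (C₀ / (π * a) * √(2 * (t₂ - t₁) / (a * dist x y))) ^ 2 :=
          pow_le_pow_left₀ (abs_nonneg _)
            (abs_waveKernel_sub_le ha hxy hσ_meas (hσ_bdd y) (sub_pos.1 hδ).le) 2
      _ = K * (t₂ - t₁) / dist x y := by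
          rw [hK, mul_pow, sq_sqrt (by positivity)]
          field_simp
      _ ≤ (K + 1) * h ^ (2 * β) / dist x y := by
          gcongr
          · linarith
          · linarith
  · exact ⟨waveKernel_eq_zero_of_le (by nlinarith [ht₁.2]),
      waveKernel_eq_zero_of_le (by nlinarith [ht₂.2])⟩

/-- Combined squared time-increment bound for the planar wave kernel, with
`β = min(γ, 1/2)`: for `0 < t₂ - t₁ < h ≤ 1`,
`|G(x,y,t₁) - G(x,y,t₂)|² ≤ C h^{2β}/|x-y|` when `|x-y| < aT`, and the kernel
vanishes when `|x-y| ≥ aT`. -/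
theorem waveKernel_squared_increment_bound
    (a T : ℝ) (ha : 0 < a) (hT : 0 < T)
    (γ : ℝ) (hγ : γ ∈ Set.Ioc (0 : ℝ) 1) (β : ℝ) (hβ : β = min γ (1 / 2))
    (σ : EuclideanSpace ℝ (Fin 2) → ℝ → ℝ) (C₀ : ℝ)
    (hσ_bdd : ∀ x : EuclideanSpace ℝ (Fin 2), ∀ t : ℝ, 0 ≤ t → |σ x t| ≤ C₀)
    (hσ_hold : ∀ x : EuclideanSpace ℝ (Fin 2), ∀ t s : ℝ, 0 ≤ t → 0 ≤ s →
      |σ x t - σ x s| ≤ |t - s| ^ γ) :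
    ∃ C : ℝ, 0 < C ∧
      ∀ (x y : EuclideanSpace ℝ (Fin 2)) (h t₁ t₂ : ℝ),
        x ≠ y → h ∈ Set.Ioc (0 : ℝ) 1 →
        t₁ ∈ Set.Icc (0 : ℝ) T → t₂ ∈ Set.Icc (0 : ℝ) T →
        0 < t₂ - t₁ → t₂ - t₁ < h →
        (dist x y < a * T →
          |waveKernel a σ x y t₁ - waveKernel a σ x y t₂| ^ 2 ≤
            C * h ^ (2 * β) / dist x y) ∧
        (a * T ≤ dist x y →
          waveKernel a σ x y t₁ = 0 ∧ waveKernel a σ x y t₂ = 0) :=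
  waveKernel_squared_increment_bound_general a T ha γ hγ β hβ σ C₀ hσ_bdd hσ_hold
end
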